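/- For each 1 ≤ k ≤ m, the map ψ_k is well-defined: if (N, A) ∈ 𝒩_{k−1}, then ψ_k(N, A) ∈ 𝒩_k. -/
import Mathlib


open Finset

/-- The support of a signed subset `X = (X⁺, X⁻)`. -/
def supp {α : Type} [DecidableEq α] (X : Finset α × Finset α) : Finset α := X.1 ∪ X.2

/-- An oriented matroid on ground set `α`, given by its collection of signed circuits,
satisfying the signed circuit axioms (C1)-(C4). -/
structure OM (α : Type) [DecidableEq α] where
  C : Set (Finset α × Finset α)
  disj : ∀ X ∈ C, Disjoint X.1 X.2
  not_empty_mem : ((∅ : Finset α), (∅ : Finset α)) ∉ C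
  neg_mem : ∀ X ∈ C, (X.2, X.1) ∈ C
  incomp : ∀ X ∈ C, ∀ Y ∈ C, supp X ⊆ supp Y → X = Y ∨ X = (Y.2, Y.1)
  elimAx : ∀ X ∈ C, ∀ Y ∈ C, X ≠ Y → X ≠ (Y.2, Y.1) → ∀ e ∈ X.1 ∩ Y.2,
    ∃ Z ∈ C, Z.1 ⊆ (X.1 ∪ Y.1).erase e ∧ Z.2 ⊆ (X.2 ∪ Y.2).erase e

/-- A collection of signed subsets is acyclic if it contains no positive member. -/
def Acyclic {α : Type} (C : Set (Finset α × Finset α)) : Prop :=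
  ∀ X ∈ C, X.2 ≠ ∅

/-- Reorientation of a signed subset by `A`. -/
def reorient {α : Type} [DecidableEq α] (A : Finset α) (X : Finset α × Finset α) :
    Finset α × Finset α :=
  ((X.1 \ A) ∪ (X.2 ∩ A), (X.2 \ A) ∪ (X.1 ∩ A))

/-- Reorientation of a collection of signed subsets by `A`. -/
def reorientC {α : Type} [DecidableEq α] (A : Finset α)
    (C : Set (Finset α × Finset α)) : Set (Finset α × Finset α) :=
  reorient A '' C

/-- Deletion: keep the members whose support avoids `D`. -/
def delC {α : Type} [DecidableEq α] (D : Finset α)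
    (C : Set (Finset α × Finset α)) : Set (Finset α × Finset α) :=
  {X ∈ C | Disjoint (supp X) D}

/-- The pre-circuits of the contraction by `T`. -/
def contrPre {α : Type} [DecidableEq α] (T : Finset α)
    (C : Set (Finset α × Finset α)) : Set (Finset α × Finset α) :=
  {Z | ∃ Y ∈ C, supp Y \ T ≠ ∅ ∧ Z = (Y.1 \ T, Y.2 \ T)}

/-- Contraction: the support-inclusion-minimal members of `contrPre T C`. -/
def contrC {α : Type} [DecidableEq α] (T : Finset α)
    (C : Set (Finset α × Finset α)) : Set (Finset α × Finset α) :=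
  {Z ∈ contrPre T C | ∀ W ∈ contrPre T C, supp W ⊆ supp Z → supp W = supp Z}

/-- `N` is an NBC subset of the underlying matroid of `M`: it contains no
broken circuit, i.e. no circuit of the underlying matroid with its maximal
element deleted. -/
def IsNBC {α : Type} [DecidableEq α] [LinearOrder α] (M : OM α) (N : Finset α) : Prop :=
  ∀ X ∈ M.C, ∀ h : (supp X).Nonempty, ¬ (supp X).erase ((supp X).max' h) ⊆ N

/-- `E_k = {e₁, …, e_k}`: the first `k` elements of the ground set `Fin m`. -/
def Ek (m k : ℕ) : Finset (Fin m) := Finset.filter (fun i => (i : ℕ) < k) Finset.univ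

/-- `M` is loopless: no signed circuit has support of size one. -/
def Loopless {m : ℕ} (M : OM (Fin m)) : Prop := ∀ X ∈ M.C, (supp X).card ≠ 1

/-- `M(N, A) = ₋ₐ(M ∖ (E_k − N) / N)`. -/
def MNA {m : ℕ} (M : OM (Fin m)) (k : ℕ) (N A : Finset (Fin m)) :
    Set (Finset (Fin m) × Finset (Fin m)) :=
  reorientC A (contrC N (delC (Ek m k \ N) M.C))

/-- The set `𝒩_k` of pairs `(N, A)` with `N ⊆ E_k` an NBC subset of the underlying
matroid, `A ⊆ E − E_k`, and `M(N, A)` acyclic. -/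
def NFam {m : ℕ} (M : OM (Fin m)) (k : ℕ) : Set (Finset (Fin m) × Finset (Fin m)) :=
  {p | p.1 ⊆ Ek m k ∧ IsNBC M p.1 ∧ p.2 ⊆ (Ek m k)ᶜ ∧ Acyclic (MNA M k p.1 p.2)}

open scoped Classical in
/-- The map `ψ_k` (where `j = k - 1` and `e = e_k`), defined on `𝒩_{k-1}`:
`ψ_k(N, A) = (N ∪ {e_k}, A)` if `e_k ∉ A` and `₋{e_k}M(N, A)` is acyclic,
`ψ_k(N, A) = (N, A)` if `e_k ∉ A` and `₋{e_k}M(N, A)` is not acyclic, and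
`ψ_k(N, A) = (N, A − {e_k})` if `e_k ∈ A`. -/
noncomputable def psi {m : ℕ} (M : OM (Fin m)) (j : ℕ) (e : Fin m)
    (p : Finset (Fin m) × Finset (Fin m)) : Finset (Fin m) × Finset (Fin m) :=
  if e ∈ p.2 then (p.1, p.2.erase e)
  else if Acyclic (reorientC {e} (MNA M j p.1 p.2)) then (insert e p.1, p.2)
  else p

-- helper lemmas
variable {α : Type} [DecidableEq α]

lemma supp_swap (X : Finset α × Finset α) : supp (X.2, X.1) = supp X := union_comm _ _

lemma supp_sdiff (Y : Finset α × Finset α) (T : Finset α) :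
    supp (Y.1 \ T, Y.2 \ T) = supp Y \ T := (union_sdiff_distrib Y.1 Y.2 T).symm

lemma supp_eq_empty_iff {X : Finset α × Finset α} : supp X = ∅ ↔ X = (∅, ∅) := by
  obtain ⟨a, b⟩ := X
  simp [supp, union_eq_empty, Prod.ext_iff]

lemma supp_reorient (A : Finset α) (X : Finset α × Finset α) :
    supp (reorient A X) = supp X := by
  ext x; simp only [supp, reorient, mem_union, mem_sdiff, mem_inter]; tauto

lemma disjoint_reorient {A : Finset α} {X : Finset α × Finset α} (h : Disjoint X.1 X.2) :
    Disjoint (reorient A X).1 (reorient A X).2 := by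
  rw [Finset.disjoint_left] at h ⊢
  intro x hx1 hx2
  simp only [reorient, mem_union, mem_sdiff, mem_inter] at hx1 hx2
  have := @h x; tauto

lemma reorient_swap (A : Finset α) (X : Finset α × Finset α) :
    reorient A (X.2, X.1) = ((reorient A X).2, (reorient A X).1) := rfl

lemma mem_contrPre_iff {C : Set (Finset α × Finset α)} {T D : Finset α} {Z} :
    Z ∈ contrPre T (delC D C) ↔
      ∃ Y, Y ∈ C ∧ Disjoint (supp Y) D ∧ supp Y \ T ≠ ∅ ∧ Z = (Y.1 \ T, Y.2 \ T) := by
  constructor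
  · rintro ⟨Y, ⟨h1, h2⟩, h3, h4⟩; exact ⟨Y, h1, h2, h3, h4⟩
  · rintro ⟨Y, h1, h2, h3, h4⟩; exact ⟨Y, ⟨h1, h2⟩, h3, h4⟩

lemma mem_contrC_iff {C : Set (Finset α × Finset α)} {T : Finset α} {Z} :
    Z ∈ contrC T C ↔ Z ∈ contrPre T C ∧
      ∀ W ∈ contrPre T C, supp W ⊆ supp Z → supp W = supp Z := Iff.rfl

lemma swap_mem_contrC {C : Set (Finset α × Finset α)} {T : Finset α} {Z}
    (hC : ∀ X ∈ C, (X.2, X.1) ∈ C) (hZ : Z ∈ contrC T C) : (Z.2, Z.1) ∈ contrC T C := by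
  obtain ⟨⟨Y, hY, hne, hZeq⟩, hmin⟩ := hZ
  refine ⟨⟨(Y.2, Y.1), hC _ hY, by rwa [supp_swap], by rw [hZeq]⟩, ?_⟩
  intro W hW hsub
  rw [supp_swap] at hsub ⊢
  exact hmin W hW hsub

lemma swap_mem_delC {C : Set (Finset α × Finset α)} {D : Finset α} {X}
    (hC : ∀ X ∈ C, (X.2, X.1) ∈ C) (hX : X ∈ delC D C) : (X.2, X.1) ∈ delC D C :=
  ⟨hC _ hX.1, by rw [supp_swap]; exact hX.2⟩

lemma supp_ne_empty_of_contrPre {C : Set (Finset α × Finset α)} {T D : Finset α} {Z}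
    (hZ : Z ∈ contrPre T (delC D C)) : supp Z ≠ ∅ := by
  obtain ⟨Y, _, _, h3, rfl⟩ := mem_contrPre_iff.1 hZ
  rwa [supp_sdiff]

lemma both_nonempty (M : OM α) {T D A : Finset α} {Z}
    (h1 : Acyclic (reorientC A (contrC T (delC D M.C))))
    (hZ : Z ∈ contrC T (delC D M.C)) :
    (reorient A Z).1 ≠ ∅ ∧ (reorient A Z).2 ≠ ∅ := by
  have hswapC : ∀ X ∈ delC D M.C, (X.2, X.1) ∈ delC D M.C :=
    fun X hX => swap_mem_delC M.neg_mem hX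
  have h2 := h1 _ ⟨Z, hZ, rfl⟩
  have h3 := h1 _ ⟨(Z.2, Z.1), swap_mem_contrC hswapC hZ, rfl⟩
  rw [reorient_swap] at h3
  exact ⟨h3, h2⟩

lemma contrC_insert_del (M : OM α) {N D : Finset α} {e : α} (heN : e ∉ N)
    {Z} (hZ : Z ∈ contrC N (delC (insert e D) M.C)) :
    Z ∈ contrC N (delC D M.C) ∧ e ∉ supp Z := by
  obtain ⟨hpre, hmin⟩ := hZ
  obtain ⟨Y, hY, hdisj, hne, rfl⟩ := mem_contrPre_iff.1 hpre
  rw [Finset.disjoint_insert_right] at hdisj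
  have heZ : e ∉ supp (Y.1 \ N, Y.2 \ N) := by
    rw [supp_sdiff]; intro h; exact hdisj.1 (mem_sdiff.1 h).1
  refine ⟨⟨mem_contrPre_iff.2 ⟨Y, hY, hdisj.2, hne, rfl⟩, ?_⟩, heZ⟩
  intro W hW hsub
  obtain ⟨Y', hY', hdisj', hne', rfl⟩ := mem_contrPre_iff.1 hW
  have heY' : e ∉ supp Y' := by
    intro h
    have : e ∈ supp (Y'.1 \ N, Y'.2 \ N) := by
      rw [supp_sdiff]; exact mem_sdiff.2 ⟨h, heN⟩
    exact heZ (hsub this)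
  refine hmin _ (mem_contrPre_iff.2 ⟨Y', hY', ?_, hne', rfl⟩) hsub
  rw [Finset.disjoint_insert_right]; exact ⟨heY', hdisj'⟩

lemma reorient_erase {A : Finset α} {e : α} {Z : Finset α × Finset α} (h : e ∉ supp Z) :
    reorient (A.erase e) Z = reorient A Z := by
  have h1 : e ∉ Z.1 := fun hh => h (mem_union_left _ hh)
  have h2 : e ∉ Z.2 := fun hh => h (mem_union_right _ hh)
  unfold reorient
  congr 1 <;> ext x <;>
    simp only [mem_union, mem_sdiff, mem_inter, mem_erase] <;>
    (by_cases hxe : x = e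
     · subst hxe; tauto
     · tauto)

lemma acyclic_step (M : OM α) {N A A' D : Finset α} {e : α} (heN : e ∉ N)
    (hAA' : ∀ Z : Finset α × Finset α, e ∉ supp Z → reorient A' Z = reorient A Z)
    (h1 : Acyclic (reorientC A (contrC N (delC D M.C)))) :
    Acyclic (reorientC A' (contrC N (delC (insert e D) M.C))) := by
  rintro _ ⟨Z, hZ, rfl⟩
  obtain ⟨hZ', he⟩ := contrC_insert_del M heN hZ
  rw [hAA' Z he]
  exact h1 _ ⟨Z, hZ', rfl⟩

lemma disj_of_contrPre (M : OM α) {N D : Finset α} {Z}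
    (hZ : Z ∈ contrPre N (delC D M.C)) : Disjoint Z.1 Z.2 := by
  obtain ⟨Y, hY, _, _, rfl⟩ := mem_contrPre_iff.1 hZ
  exact (M.disj Y hY).mono (sdiff_subset) (sdiff_subset)

lemma exists_min_small (M : OM α) {N D : Finset α} {e f : α}
    {Z0} (hZ0 : Z0 ∈ contrPre N (delC D M.C)) (hs : supp Z0 ⊆ {e, f}) :
    ∃ V ∈ contrC N (delC D M.C), supp V ⊆ {e, f} := by
  by_cases hmin : ∀ W ∈ contrPre N (delC D M.C), supp W ⊆ supp Z0 → supp W = supp Z0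
  · exact ⟨Z0, ⟨hZ0, hmin⟩, hs⟩
  · push_neg at hmin
    obtain ⟨W, hW, hsub, hne⟩ := hmin
    have hWne : supp W ≠ ∅ := supp_ne_empty_of_contrPre hW
    have hcard : (supp W).card = 1 := by
      have hlt : (supp W).card < (supp Z0).card :=
        card_lt_card (ssubset_of_subset_of_ne hsub hne)
      have h2 : (supp Z0).card ≤ 2 := by
        refine (card_le_card hs).trans ?_
        have := card_insert_le e ({f} : Finset α)
        simpa using this
      have h3 : 1 ≤ (supp W).card := card_pos.2 (nonempty_iff_ne_empty.2 hWne)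
      omega
    obtain ⟨x, hx⟩ := card_eq_one.1 hcard
    refine ⟨W, ⟨hW, ?_⟩, (hsub.trans hs)⟩
    intro U hU hsubU
    have hUne : supp U ≠ ∅ := supp_ne_empty_of_contrPre hU
    rw [hx] at hsubU ⊢
    rcases (subset_singleton_iff.1 hsubU) with h | h
    · exact absurd h hUne
    · exact h

lemma no_small (M : OM α) {N A D : Finset α} {e f : α}
    (h1 : Acyclic (reorientC A (contrC N (delC D M.C))))
    (h2 : Acyclic (reorientC {e} (reorientC A (contrC N (delC D M.C)))))
    {Z0} (hZ0 : Z0 ∈ contrPre N (delC D M.C)) (hs : supp Z0 ⊆ {e, f}) : False := by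
  obtain ⟨V, hV, hVs⟩ := exists_min_small M hZ0 hs
  obtain ⟨ha1, ha2⟩ := both_nonempty M h1 hV
  set a := reorient A V with hadef
  have hb2 : (reorient {e} a).2 ≠ ∅ := h2 _ ⟨a, ⟨V, hV, rfl⟩, rfl⟩
  have hb1 : (reorient {e} a).1 ≠ ∅ := by
    have hswapC : ∀ X ∈ delC D M.C, (X.2, X.1) ∈ delC D M.C :=
      fun X hX => swap_mem_delC M.neg_mem hX
    have := h2 _ ⟨(a.2, a.1),
      ⟨(V.2, V.1), swap_mem_contrC hswapC hV, reorient_swap A V⟩, rfl⟩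
    rw [reorient_swap] at this
    exact this
  have hadisj : Disjoint a.1 a.2 := disjoint_reorient (disj_of_contrPre M hV.1)
  have hdl := Finset.disjoint_left.1 hadisj
  have hasub1 : a.1 ⊆ ({e, f} : Finset α) := by
    refine subset_trans ?_ ((supp_reorient A V) ▸ hVs)
    exact subset_union_left
  have hasub2 : a.2 ⊆ ({e, f} : Finset α) := by
    refine subset_trans ?_ ((supp_reorient A V) ▸ hVs)
    exact subset_union_right
  obtain ⟨x, hx⟩ := nonempty_iff_ne_empty.2 ha1
  obtain ⟨y, hy⟩ := nonempty_iff_ne_empty.2 ha2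
  have hxef := hasub1 hx
  have hyef := hasub2 hy
  simp only [mem_insert, mem_singleton] at hxef hyef
  rcases hxef with rfl | rfl
  · -- e = x ∈ a.1
    have hyf : y = f := by
      rcases hyef with rfl | rfl
      · exact absurd hy (hdl hx)
      · rfl
    subst hyf
    apply hb1
    rw [eq_empty_iff_forall_notMem]
    intro z hz
    simp only [reorient, mem_union, mem_sdiff, mem_inter, mem_singleton] at hz
    rcases hz with ⟨hz1, hz2⟩ | ⟨hz1, hz2⟩
    · have := hasub1 hz1
      simp only [mem_insert, mem_singleton] at this
      rcases this with rfl | rfl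
      · exact hz2 rfl
      · exact hdl hz1 hy
    · subst hz2; exact hdl hx hz1
  · -- f = x ∈ a.1
    have hye : y = e := by
      rcases hyef with rfl | rfl
      · rfl
      · exact absurd hy (hdl hx)
    subst hye
    apply hb2
    rw [eq_empty_iff_forall_notMem]
    intro z hz
    simp only [reorient, mem_union, mem_sdiff, mem_inter, mem_singleton] at hz
    rcases hz with ⟨hz1, hz2⟩ | ⟨hz1, hz2⟩
    · have := hasub2 hz1
      simp only [mem_insert, mem_singleton] at this
      rcases this with rfl | rfl
      · exact hz2 rfl
      · exact hdl hx hz1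
    · subst hz2; exact hdl hz1 hy

lemma sdiff_insert_notMem {s N : Finset α} {e : α} (h : e ∉ s) :
    s \ insert e N = s \ N := by
  ext x
  simp only [mem_sdiff, mem_insert, not_or]
  constructor
  · rintro ⟨hx, _, hn⟩; exact ⟨hx, hn⟩
  · rintro ⟨hx, hn⟩; exact ⟨hx, fun he' => h (he' ▸ hx), hn⟩

lemma sdiff_insert' (s N : Finset α) (e : α) :
    s \ insert e N = (s \ N).erase e := by
  ext x; simp only [mem_sdiff, mem_insert, not_or, mem_erase]; tauto

lemma key_acyclic (M : OM α) {N A D : Finset α} {e : α}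
    (heN : e ∉ N) (heA : e ∉ A)
    (hNBC : ∀ Y ∈ M.C, ¬ supp Y ⊆ N)
    (hNBCe : ∀ Y ∈ M.C, ¬ supp Y ⊆ insert e N)
    (h1 : Acyclic (reorientC A (contrC N (delC D M.C))))
    (h2 : Acyclic (reorientC {e} (reorientC A (contrC N (delC D M.C))))) :
    Acyclic (reorientC A (contrC (insert e N) (delC D M.C))) := by
  rintro _ ⟨Z, ⟨hpre, hmin⟩, rfl⟩ hpos
  obtain ⟨Y, hY, hYD, hYne, rfl⟩ := mem_contrPre_iff.1 hpre
  set T' : Finset α := insert e N with hT'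
  set SZ : Finset α := supp Y \ T' with hSZ
  have hsuppZ : supp (Y.1 \ T', Y.2 \ T') = SZ := supp_sdiff Y T'
  have heT' : e ∈ T' := mem_insert_self e N
  have heSZ : e ∉ SZ := fun h => (mem_sdiff.1 h).2 heT'
  have hZne : SZ ≠ ∅ := hYne
  -- decompose positivity
  have hpos2 : ((Y.2 \ T') \ A) ∪ ((Y.1 \ T') ∩ A) = ∅ := hpos
  rw [union_eq_empty] at hpos2
  have hZ2A : (Y.2 \ T') ⊆ A := sdiff_eq_empty_iff_subset.1 hpos2.1
  have hZ1A : ∀ x ∈ Y.1 \ T', x ∉ A := by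
    intro x hx hxA
    exact (eq_empty_iff_forall_notMem.1 hpos2.2) x (mem_inter.2 ⟨hx, hxA⟩)
  by_cases heY : e ∈ supp Y
  case neg =>
    -- e ∉ supp Y : Z is itself a minimal level-N circuit
    have he1 : e ∉ Y.1 := fun h => heY (mem_union_left _ h)
    have he2 : e ∉ Y.2 := fun h => heY (mem_union_right _ h)
    have hq1 : Y.1 \ T' = Y.1 \ N := sdiff_insert_notMem he1
    have hq2 : Y.2 \ T' = Y.2 \ N := sdiff_insert_notMem he2
    have hqs : supp Y \ T' = supp Y \ N := sdiff_insert_notMem heY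
    have hZmem : (Y.1 \ T', Y.2 \ T') ∈ contrC N (delC D M.C) := by
      refine ⟨mem_contrPre_iff.2 ⟨Y, hY, hYD, by rw [← hqs]; exact hYne, by rw [hq1, hq2]⟩, ?_⟩
      intro W hW hsub
      obtain ⟨Y', hY', hD', hne', rfl⟩ := mem_contrPre_iff.1 hW
      have heW : e ∉ supp Y' \ N := by
        intro h
        have : e ∈ SZ := (hsuppZ ▸ hsub) (by rw [supp_sdiff]; exact h)
        exact heSZ this
      have heY' : e ∉ supp Y' := fun h => heW (mem_sdiff.2 ⟨h, heN⟩)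
      have he1' : e ∉ Y'.1 := fun h => heY' (mem_union_left _ h)
      have he2' : e ∉ Y'.2 := fun h => heY' (mem_union_right _ h)
      refine hmin _ (mem_contrPre_iff.2 ⟨Y', hY', hD', ?_, ?_⟩) hsub
      · rw [sdiff_insert_notMem heY']; exact hne'
      · rw [sdiff_insert_notMem he1', sdiff_insert_notMem he2']
    exact h1 _ ⟨_, hZmem, rfl⟩ hpos
  case pos =>
    -- e ∈ supp Y
    have hZ'pre : (Y.1 \ N, Y.2 \ N) ∈ contrPre N (delC D M.C) := by
      refine mem_contrPre_iff.2 ⟨Y, hY, hYD, ?_, rfl⟩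
      intro h
      exact hZne (by
        rw [hSZ, sdiff_insert', h]; simp)
    have hsuppZ' : supp (Y.1 \ N, Y.2 \ N) = insert e SZ := by
      rw [supp_sdiff, hSZ, hT', sdiff_insert']
      exact (insert_erase (mem_sdiff.2 ⟨heY, heN⟩)).symm
    -- the key claim about small pre-circuits
    have hclaim : ∀ V ∈ contrPre N (delC D M.C), supp V ⊆ insert e SZ →
        supp V = insert e SZ ∨ (e ∉ supp V ∧ supp V = SZ) := by
      intro V hV hVs
      obtain ⟨Y₁, hY₁, hD₁, hne₁, rfl⟩ := mem_contrPre_iff.1 hV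
      rw [supp_sdiff] at hVs ⊢
      by_cases heV : e ∈ supp Y₁ \ N
      · left
        have hUs : supp Y₁ \ T' = (supp Y₁ \ N).erase e := by rw [hT', sdiff_insert']
        by_cases hUe : supp Y₁ \ T' = ∅
        · exfalso
          exact hNBCe Y₁ hY₁ (sdiff_eq_empty_iff_subset.1 (hT' ▸ hUe))
        · have hUpre : (Y₁.1 \ T', Y₁.2 \ T') ∈ contrPre T' (delC D M.C) :=
            mem_contrPre_iff.2 ⟨Y₁, hY₁, hD₁, hUe, rfl⟩
          have hUsub : supp (Y₁.1 \ T', Y₁.2 \ T') ⊆ supp (Y.1 \ T', Y.2 \ T') := by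
            rw [supp_sdiff, hsuppZ, hUs]
            intro x hx
            rcases mem_erase.1 hx with ⟨hxe, hx2⟩
            rcases mem_insert.1 (hVs hx2) with h | h
            · exact absurd h hxe
            · exact h
          have := hmin _ hUpre hUsub
          rw [supp_sdiff, hsuppZ, hUs] at this
          rw [← this, insert_erase heV]
      · right
        refine ⟨heV, ?_⟩
        have heY₁ : e ∉ supp Y₁ := fun h => heV (mem_sdiff.2 ⟨h, heN⟩)
        have he1' : e ∉ Y₁.1 := fun h => heY₁ (mem_union_left _ h)
        have he2' : e ∉ Y₁.2 := fun h => heY₁ (mem_union_right _ h)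
        have hVpre : (Y₁.1 \ N, Y₁.2 \ N) ∈ contrPre T' (delC D M.C) := by
          refine mem_contrPre_iff.2 ⟨Y₁, hY₁, hD₁, ?_, ?_⟩
          · rw [hT', sdiff_insert_notMem heY₁]; exact hne₁
          · rw [hT', sdiff_insert_notMem he1', sdiff_insert_notMem he2']
        have hVsub : supp (Y₁.1 \ N, Y₁.2 \ N) ⊆ supp (Y.1 \ T', Y.2 \ T') := by
          rw [supp_sdiff, hsuppZ]
          intro x hx
          rcases mem_insert.1 (hVs hx) with h | h
          · exact absurd (h ▸ hx) heV
          · exact h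
        have := hmin _ hVpre hVsub
        rwa [supp_sdiff, hsuppZ] at this
    by_cases hWex : ∃ W ∈ contrPre N (delC D M.C), supp W = SZ
    · -- there is a level-N pre-circuit with support SZ
      obtain ⟨W, hWpre, hWsupp⟩ := hWex
      have hWmin : W ∈ contrC N (delC D M.C) := by
        refine ⟨hWpre, ?_⟩
        intro V hV hVs
        rcases hclaim V hV (((hWsupp ▸ hVs : supp V ⊆ SZ).trans (subset_insert e SZ))) with h | h
        · exfalso
          have : e ∈ SZ := hWsupp ▸ hVs (h ▸ mem_insert_self e SZ)
          exact heSZ this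
        · rw [hWsupp]; exact h.2
      obtain ⟨_, ha2W⟩ := both_nonempty M h1 hWmin
      obtain ⟨g, hg⟩ := nonempty_iff_ne_empty.2 ha2W
      obtain ⟨Y₁, hY₁, hD₁, hne₁, hWeq⟩ := mem_contrPre_iff.1 hWpre
      subst hWeq
      rw [supp_sdiff] at hWsupp
      have hgW : g ∈ ((Y₁.2 \ N) \ A) ∪ ((Y₁.1 \ N) ∩ A) := hg
      have hgsupp : g ∈ SZ := by
        rw [← hWsupp]
        rcases mem_union.1 hgW with h | h
        · obtain ⟨h', _⟩ := mem_sdiff.1 h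
          obtain ⟨h1', h2'⟩ := mem_sdiff.1 h'
          exact mem_sdiff.2 ⟨mem_union_right _ h1', h2'⟩
        · obtain ⟨h', _⟩ := mem_inter.1 h
          obtain ⟨h1', h2'⟩ := mem_sdiff.1 h'
          exact mem_sdiff.2 ⟨mem_union_left _ h1', h2'⟩
      have hgN : g ∉ N := ((mem_sdiff.1 (hWsupp ▸ hgsupp)).2 : g ∉ N)
      have hgT' : g ∉ T' := (mem_sdiff.1 hgsupp).2
      have hgY : g ∈ supp Y := (mem_sdiff.1 hgsupp).1
      have heY₁ : e ∉ supp Y₁ := by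
        intro h
        have : e ∈ SZ := by
          rw [← hWsupp]; exact mem_sdiff.2 ⟨h, heN⟩
        exact heSZ this
      have hYne₁ : Y ≠ Y₁ := fun h => heY₁ (h ▸ heY)
      have hYne₂ : Y ≠ (Y₁.2, Y₁.1) := by
        intro h
        exact heY₁ ((supp_swap Y₁) ▸ (h ▸ heY))
      have hkey : ∃ Y₂ ∈ M.C, supp Y₂ ⊆ (supp Y ∪ supp Y₁).erase g := by
        rcases mem_union.1 hgW with h | h
        · -- g ∈ Y₁.2, g ∉ A ; then g ∈ Y.1
          obtain ⟨hg2, hgA⟩ := mem_sdiff.1 h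
          have hgY₁2 : g ∈ Y₁.2 := (mem_sdiff.1 hg2).1
          have hgY1 : g ∈ Y.1 := by
            rcases mem_union.1 hgY with h' | h'
            · exact h'
            · exact absurd (hZ2A (mem_sdiff.2 ⟨h', hgT'⟩)) hgA
          obtain ⟨Y₂, hY₂, hs1, hs2⟩ :=
            M.elimAx Y hY Y₁ hY₁ hYne₁ hYne₂ g (mem_inter.2 ⟨hgY1, hgY₁2⟩)
          refine ⟨Y₂, hY₂, ?_⟩
          intro x hx
          rcases mem_union.1 hx with h' | h'
          · have := hs1 h'
            rw [mem_erase] at this ⊢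
            refine ⟨this.1, ?_⟩
            rcases mem_union.1 this.2 with h'' | h''
            · exact mem_union_left _ (mem_union_left _ h'')
            · exact mem_union_right _ (mem_union_left _ h'')
          · have := hs2 h'
            rw [mem_erase] at this ⊢
            refine ⟨this.1, ?_⟩
            rcases mem_union.1 this.2 with h'' | h''
            · exact mem_union_left _ (mem_union_right _ h'')
            · exact mem_union_right _ (mem_union_right _ h'')
        · -- g ∈ Y₁.1, g ∈ A ; then g ∈ Y.2
          obtain ⟨hg1, hgA⟩ := mem_inter.1 h
          have hgY₁1 : g ∈ Y₁.1 := (mem_sdiff.1 hg1).1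
          have hgY2 : g ∈ Y.2 := by
            rcases mem_union.1 hgY with h' | h'
            · exact absurd hgA (hZ1A g (mem_sdiff.2 ⟨h', hgT'⟩))
            · exact h'
          have hYne₁' : Y₁ ≠ Y := fun h' => hYne₁ h'.symm
          have hYne₂' : Y₁ ≠ (Y.2, Y.1) := by
            intro h'
            apply heY₁
            rw [h', supp_swap]
            exact heY
          obtain ⟨Y₂, hY₂, hs1, hs2⟩ :=
            M.elimAx Y₁ hY₁ Y hY hYne₁' hYne₂' g (mem_inter.2 ⟨hgY₁1, hgY2⟩)
          refine ⟨Y₂, hY₂, ?_⟩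
          intro x hx
          rcases mem_union.1 hx with h' | h'
          · have := hs1 h'
            rw [mem_erase] at this ⊢
            refine ⟨this.1, ?_⟩
            rcases mem_union.1 this.2 with h'' | h''
            · exact mem_union_right _ (mem_union_left _ h'')
            · exact mem_union_left _ (mem_union_left _ h'')
          · have := hs2 h'
            rw [mem_erase] at this ⊢
            refine ⟨this.1, ?_⟩
            rcases mem_union.1 this.2 with h'' | h''
            · exact mem_union_right _ (mem_union_right _ h'')
            · exact mem_union_left _ (mem_union_right _ h'')
      obtain ⟨Y₂, hY₂, hY₂s⟩ := hkey
      have hY₂D : Disjoint (supp Y₂) D := by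
        refine Finset.disjoint_left.2 ?_
        intro x hx hxD
        rcases mem_union.1 (mem_erase.1 (hY₂s hx)).2 with h' | h'
        · exact (Finset.disjoint_left.1 hYD) h' hxD
        · exact (Finset.disjoint_left.1 hD₁) h' hxD
      have hY₂ne : supp Y₂ \ N ≠ ∅ := by
        intro h
        exact hNBC Y₂ hY₂ (sdiff_eq_empty_iff_subset.1 h)
      have hVpre : (Y₂.1 \ N, Y₂.2 \ N) ∈ contrPre N (delC D M.C) :=
        mem_contrPre_iff.2 ⟨Y₂, hY₂, hY₂D, hY₂ne, rfl⟩
      have hVs : supp (Y₂.1 \ N, Y₂.2 \ N) ⊆ insert e SZ := by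
        rw [supp_sdiff]
        intro x hx
        obtain ⟨hx2, hxN⟩ := mem_sdiff.1 hx
        obtain ⟨hxg, hxu⟩ := mem_erase.1 (hY₂s hx2)
        rcases mem_union.1 hxu with h' | h'
        · by_cases hxT : x ∈ T'
          · rcases mem_insert.1 hxT with h'' | h''
            · exact h'' ▸ mem_insert_self e SZ
            · exact absurd h'' hxN
          · exact mem_insert_of_mem (mem_sdiff.2 ⟨h', hxT⟩)
        · exact mem_insert_of_mem (hWsupp ▸ mem_sdiff.2 ⟨h', hxN⟩)
      have hgV : g ∉ supp (Y₂.1 \ N, Y₂.2 \ N) := by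
        rw [supp_sdiff]
        intro h
        exact (mem_erase.1 (hY₂s (mem_sdiff.1 h).1)).1 rfl
      rcases hclaim _ hVpre hVs with h | h
      · exact hgV (h ▸ mem_insert_of_mem hgsupp)
      · exact hgV (h.2 ▸ hgsupp)
    · -- no level-N pre-circuit has support SZ : Z' is minimal
      push_neg at hWex
      have hZ'min : (Y.1 \ N, Y.2 \ N) ∈ contrC N (delC D M.C) := by
        refine ⟨hZ'pre, ?_⟩
        intro V hV hVs
        rw [hsuppZ'] at hVs
        rcases hclaim V hV hVs with h | h
        · rw [hsuppZ', h]
        · exact absurd h.2 (hWex V hV)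
      have hdisjY := Finset.disjoint_left.1 (M.disj Y hY)
      rcases mem_union.1 heY with he1 | he2
      · -- e ∈ Y.1 : contradict h1
        apply h1 _ ⟨_, hZ'min, rfl⟩
        rw [eq_empty_iff_forall_notMem]
        intro x hx
        rcases mem_union.1 hx with h' | h'
        · obtain ⟨hx2, hxA⟩ := mem_sdiff.1 h'
          obtain ⟨hx2', hxN⟩ := mem_sdiff.1 hx2
          have hxe : x ≠ e := fun h'' => hdisjY he1 (h'' ▸ hx2')
          have hxT : x ∉ T' := by
            intro h''
            rcases mem_insert.1 h'' with h3 | h3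
            · exact hxe h3
            · exact hxN h3
          exact hxA (hZ2A (mem_sdiff.2 ⟨hx2', hxT⟩))
        · obtain ⟨hx1, hxA⟩ := mem_inter.1 h'
          obtain ⟨hx1', hxN⟩ := mem_sdiff.1 hx1
          have hxe : x ≠ e := fun h'' => heA (h'' ▸ hxA)
          have hxT : x ∉ T' := by
            intro h''
            rcases mem_insert.1 h'' with h3 | h3
            · exact hxe h3
            · exact hxN h3
          exact hZ1A x (mem_sdiff.2 ⟨hx1', hxT⟩) hxA
      · -- e ∈ Y.2 : contradict h2
        apply h2 _ ⟨_, ⟨_, hZ'min, rfl⟩, rfl⟩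
        rw [eq_empty_iff_forall_notMem]
        intro x hx
        rcases mem_union.1 hx with h' | h'
        · obtain ⟨hx2, hxe⟩ := mem_sdiff.1 h'
          rw [mem_singleton] at hxe
          rcases mem_union.1 hx2 with h'' | h''
          · obtain ⟨hx3, hxA⟩ := mem_sdiff.1 h''
            obtain ⟨hx3', hxN⟩ := mem_sdiff.1 hx3
            have hxT : x ∉ T' := by
              intro h3
              rcases mem_insert.1 h3 with h4 | h4
              · exact hxe h4
              · exact hxN h4
            exact hxA (hZ2A (mem_sdiff.2 ⟨hx3', hxT⟩))
          · obtain ⟨hx3, hxA⟩ := mem_inter.1 h''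
            obtain ⟨hx3', hxN⟩ := mem_sdiff.1 hx3
            have hxT : x ∉ T' := by
              intro h3
              rcases mem_insert.1 h3 with h4 | h4
              · exact hxe h4
              · exact hxN h4
            exact hZ1A x (mem_sdiff.2 ⟨hx3', hxT⟩) hxA
        · obtain ⟨hx1, hxe⟩ := mem_inter.1 h'
          rw [mem_singleton] at hxe
          subst hxe
          rcases mem_union.1 hx1 with h'' | h''
          · exact hdisjY (mem_sdiff.1 (mem_sdiff.1 h'').1).1 he2
          · exact heA (mem_inter.1 h'').2


lemma nbc_to_nosub {α : Type} [DecidableEq α] [LinearOrder α] {M : OM α} {N : Finset α}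
    (h : IsNBC M N) : ∀ Y ∈ M.C, ¬ supp Y ⊆ N := by
  intro Y hY hsub
  have hne : (supp Y).Nonempty := by
    rw [nonempty_iff_ne_empty]
    intro h0
    exact M.not_empty_mem (supp_eq_empty_iff.1 h0 ▸ hY)
  exact h Y hY hne ((erase_subset _ _).trans hsub)

lemma mem_Ek {m k : ℕ} {x : Fin m} : x ∈ Ek m k ↔ (x : ℕ) < k := by
  simp [Ek]

lemma key_nbc {m : ℕ} (M : OM (Fin m)) {N A : Finset (Fin m)} {j : ℕ} {e : Fin m}
    (hje : (e : ℕ) = j)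
    (hN : N ⊆ Ek m j) (hNBC : IsNBC M N)
    (h1 : Acyclic (reorientC A (contrC N (delC (Ek m j \ N) M.C))))
    (h2 : Acyclic (reorientC {e} (reorientC A (contrC N (delC (Ek m j \ N) M.C))))) :
    IsNBC M (insert e N) := by
  intro X hX hne hsub
  set f := (supp X).max' hne with hf
  have hfBig : ∀ x ∈ supp X, x ≤ f := fun x hx => le_max' _ x hx
  have hNlt : ∀ x ∈ N, (x : ℕ) < j := fun x hx => mem_Ek.1 (hN hx)
  have heN : e ∉ N := fun h => by have := hNlt e h; omega
  have hEsub : ¬ (supp X).erase f ⊆ N := hNBC X hX hne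
  have heErase : e ∈ (supp X).erase f := by
    by_contra h
    apply hEsub
    intro x hx
    rcases mem_insert.1 (hsub hx) with h' | h'
    · exact absurd (h' ▸ hx) h
    · exact h'
  have heX : e ∈ supp X := mem_of_mem_erase heErase
  have hef : e ≠ f := (mem_erase.1 heErase).1
  have helt : (e : ℕ) < (f : ℕ) := Fin.lt_def.1 (lt_of_le_of_ne (hfBig e heX) hef)
  have hfX : f ∈ supp X := max'_mem _ _
  have hXD : Disjoint (supp X) (Ek m j \ N) := by
    rw [Finset.disjoint_left]
    intro x hx hxD
    obtain ⟨hxE, hxN⟩ := mem_sdiff.1 hxD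
    have hxj : (x : ℕ) < j := mem_Ek.1 hxE
    by_cases hxf : x = f
    · subst hxf; omega
    · rcases mem_insert.1 (hsub (mem_erase.2 ⟨hxf, hx⟩)) with h | h
      · subst h; omega
      · exact hxN h
  have hXne : supp X \ N ≠ ∅ := by
    intro h
    rw [eq_empty_iff_forall_notMem] at h
    exact h e (mem_sdiff.2 ⟨heX, heN⟩)
  have hZ0 : (X.1 \ N, X.2 \ N) ∈ contrPre N (delC (Ek m j \ N) M.C) :=
    mem_contrPre_iff.2 ⟨X, hX, hXD, hXne, rfl⟩
  refine no_small M (f := f) h1 h2 hZ0 ?_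
  rw [supp_sdiff]
  intro x hx
  obtain ⟨hx1, hx2⟩ := mem_sdiff.1 hx
  by_cases hxf : x = f
  · simp [hxf]
  · rcases mem_insert.1 (hsub (mem_erase.2 ⟨hxf, hx1⟩)) with h | h
    · simp [h]
    · exact absurd h hx2

lemma Ek_mono {m j k : ℕ} (h : j ≤ k) : Ek m j ⊆ Ek m k := by
  intro x hx; rw [mem_Ek] at *; omega

lemma Ek_succ {m k : ℕ} (hk1 : 1 ≤ k) {e : Fin m} (hje : (e : ℕ) = k - 1) :
    Ek m k = insert e (Ek m (k - 1)) := by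
  ext x
  simp only [mem_Ek, mem_insert, Fin.ext_iff, hje]
  omega

lemma Ek_sdiff_insert {m k : ℕ} (hk1 : 1 ≤ k) {e : Fin m} (hje : (e : ℕ) = k - 1)
    (N : Finset (Fin m)) : Ek m k \ insert e N = Ek m (k - 1) \ N := by
  ext x
  simp only [mem_sdiff, mem_insert, mem_Ek, not_or, Fin.ext_iff, hje]
  constructor
  · rintro ⟨h1, h2, h3⟩; exact ⟨by omega, h3⟩
  · rintro ⟨h1, h2⟩; exact ⟨by omega, by omega, h2⟩

lemma Ek_sdiff_eq_insert {m k : ℕ} (hk1 : 1 ≤ k) {e : Fin m} (hje : (e : ℕ) = k - 1)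
    {N : Finset (Fin m)} (heN : e ∉ N) :
    Ek m k \ N = insert e (Ek m (k - 1) \ N) := by
  ext x
  by_cases hxN : x ∈ N
  · have hxe : x ≠ e := fun h => heN (h ▸ hxN)
    simp [mem_sdiff, mem_insert, hxN, hxe]
  · simp only [mem_sdiff, mem_insert, hxN, mem_Ek, not_false_iff, and_true, Fin.ext_iff, hje]
    omega

/-- **Well-definedness of `ψ_k`**: if `(N, A) ∈ 𝒩_{k−1}` then `ψ_k(N, A) ∈ 𝒩_k`. -/
theorem stmt_3 (m : ℕ) (M : OM (Fin m)) (hM : Loopless M)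
    (k : ℕ) (hk1 : 1 ≤ k) (hkm : k ≤ m)
    (p : Finset (Fin m) × Finset (Fin m)) (hp : p ∈ NFam M (k - 1)) :
    psi M (k - 1) ⟨k - 1, by omega⟩ p ∈ NFam M k := by
  obtain ⟨hpN, hpNBC, hpA, hpAc⟩ := hp
  set e : Fin m := ⟨k - 1, by omega⟩ with he
  have hje : (e : ℕ) = k - 1 := rfl
  have heEk : e ∉ Ek m (k - 1) := by rw [mem_Ek]; omega
  have heN : e ∉ p.1 := fun h => heEk (hpN h)
  have hpAc' : Acyclic (reorientC p.2 (contrC p.1 (delC (Ek m (k - 1) \ p.1) M.C))) := hpAc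
  show psi M (k - 1) e p ∈ NFam M k
  unfold psi
  split_ifs with hA hAc
  · -- e ∈ p.2
    refine ⟨hpN.trans (Ek_mono (by omega)), hpNBC, ?_, ?_⟩
    · intro x hx
      obtain ⟨hxe, hx2⟩ := mem_erase.1 hx
      rw [mem_compl, Ek_succ hk1 hje, mem_insert]
      rintro (h | h)
      · exact hxe h
      · exact (mem_compl.1 (hpA hx2)) h
    · show Acyclic (MNA M k p.1 (p.2.erase e))
      rw [MNA, Ek_sdiff_eq_insert hk1 hje heN]
      exact acyclic_step M heN (fun Z hZ => reorient_erase hZ) hpAc'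
  · -- e ∉ p.2, flip acyclic
    have hAc' : Acyclic (reorientC {e}
        (reorientC p.2 (contrC p.1 (delC (Ek m (k - 1) \ p.1) M.C)))) := hAc
    have hNBCe : IsNBC M (insert e p.1) := key_nbc M hje hpN hpNBC hpAc' hAc'
    refine ⟨?_, hNBCe, ?_, ?_⟩
    · rw [Ek_succ hk1 hje]
      exact insert_subset_insert _ hpN
    · intro x hx
      rw [mem_compl, Ek_succ hk1 hje, mem_insert]
      rintro (h | h)
      · exact hA (h ▸ hx)
      · exact mem_compl.1 (hpA hx) h
    · show Acyclic (MNA M k (insert e p.1) p.2)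
      rw [MNA, Ek_sdiff_insert hk1 hje]
      exact key_acyclic M heN hA (nbc_to_nosub hpNBC) (nbc_to_nosub hNBCe) hpAc' hAc'
  · -- e ∉ p.2, not flip acyclic
    refine ⟨hpN.trans (Ek_mono (by omega)), hpNBC, ?_, ?_⟩
    · intro x hx
      rw [mem_compl, Ek_succ hk1 hje, mem_insert]
      rintro (h | h)
      · exact hA (h ▸ hx)
      · exact mem_compl.1 (hpA hx) h
    · show Acyclic (MNA M k p.1 p.2)
      rw [MNA, Ek_sdiff_eq_insert hk1 hje heN]
      exact acyclic_step M heN (fun _ _ => rfl) hpAc'
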